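/- Over graph databases with alphabet Σ = {a} and a single register r, the RL formula ∃π ((x,π,y) ∧ ∃z ∀ν (e1(π,ν,ν) → ∃z' ∃π' ((z',π',z) ∧ e2(π',ν,ν)))), where e1 := a*[r^=]·a* and e2 := ε[r^=]·a*, defines exactly the query (Q): the pairs of nodes (x,y) such that there exist a node z and a path π from x to y in which every node on π is connected to z by some path. Hence (Q) is expressible in RL over graph databases. -/

import Mathlib

/-! # Common definitions: data graphs, paths, Turing machines, complexity classes -/

/-- A data graph: nodes `0, …, n-1`, a list of labeled edges `(source, label, target)`
(labels are natural numbers), and a list of data values (`data.getD v 0` is the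
data value of node `v`; data values are natural numbers, an infinite domain). -/
structure DataGraph where
  n : ℕ
  edges : List (ℕ × ℕ × ℕ)
  data : List ℕ
deriving DecidableEq

namespace DataGraph

/-- The data value of a node. -/
def val (G : DataGraph) (v : ℕ) : ℕ := G.data.getD v 0

/-- Well-formedness over the alphabet `{0, …, s-1}`. -/
def WF (G : DataGraph) (s : ℕ) : Prop :=
  (∀ e ∈ G.edges, e.1 < G.n ∧ e.2.1 < s ∧ e.2.2 < G.n) ∧ G.data.length = G.n

/-- Well-formedness, over an arbitrary finite alphabet of labels. -/
def WFAny (G : DataGraph) : Prop :=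
  (∀ e ∈ G.edges, e.1 < G.n ∧ e.2.2 < G.n) ∧ G.data.length = G.n

/-- A graph database: the data-value function is injective. -/
def IsDB (G : DataGraph) : Prop :=
  ∀ u v, u < G.n → v < G.n → G.val u = G.val v → u = v

/-- The set of data values occurring in `G`. -/
def dataVals (G : DataGraph) : Set ℕ := {d | ∃ v, v < G.n ∧ G.val v = d}

end DataGraph

/-- A raw path: a start node together with a list of steps (label, next node). -/
structure RawPath where
  start : ℕ
  steps : List (ℕ × ℕ)
deriving DecidableEq

namespace RawPath

/-- The sequence of nodes along a path. -/
def nodes (ρ : RawPath) : List ℕ := ρ.start :: ρ.steps.map Prod.snd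

/-- The final node of a path. -/
def last (ρ : RawPath) : ℕ := (ρ.steps.map Prod.snd).getLastD ρ.start

/-- The number of edges of the path; positions are `0, …, len`. -/
def len (ρ : RawPath) : ℕ := ρ.steps.length

/-- The node at position `i` (0-indexed). -/
def nodeAt (ρ : RawPath) (i : ℕ) : ℕ := ρ.nodes.getD i 0

/-- The label of the edge between positions `i` and `i+1`. -/
def labelAt (ρ : RawPath) (i : ℕ) : ℕ := (ρ.steps.map Prod.fst).getD i 0

/-- The label of a path: its sequence of edge labels. -/
def label (ρ : RawPath) : List ℕ := ρ.steps.map Prod.fst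

/-- Concatenation of two paths (meaningful when `ρ₁.last = ρ₂.start`). -/
def append (ρ₁ ρ₂ : RawPath) : RawPath := ⟨ρ₁.start, ρ₁.steps ++ ρ₂.steps⟩

end RawPath

/-- `ρ` is a path of the data graph `G`. -/
def DataGraph.IsPath (G : DataGraph) (ρ : RawPath) : Prop :=
  ρ.start < G.n ∧ ∀ i, i < ρ.steps.length →
    (ρ.nodeAt i, ρ.labelAt i, ρ.nodeAt (i + 1)) ∈ G.edges

/-- A concrete encoding of a data graph as a word over `ℕ`. -/
def encodeGraph (G : DataGraph) : List ℕ :=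
  G.n :: G.edges.length ::
    (((G.edges.map fun e => [e.1, e.2.1, e.2.2]).foldr (· ++ ·) []) ++
      G.data.length :: G.data)

/-! ## Turing machines and space-bounded computation -/

/-- A deterministic one-tape Turing machine; states and tape symbols coded by `ℕ`
(`0` is the blank symbol).  `δ q a = (q', a', d)`: new state, written symbol,
head direction (`true` = right). -/
structure TMach where
  q0 : ℕ
  qf : ℕ
  δ : ℕ → ℕ → ℕ × ℕ × Bool

namespace TMach

/-- One computation step on a configuration (state, head, tape). -/
def stepc (M : TMach) (c : ℕ × ℕ × List ℕ) : ℕ × ℕ × List ℕ :=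
  let out := M.δ c.1 (c.2.2.getD c.2.1 0)
  (out.1, (if out.2.2 then c.2.1 + 1 else c.2.1 - 1), c.2.2.set c.2.1 out.2.1)

/-- Initial configuration on input `w` with a tape of `m` cells. -/
def initConf (M : TMach) (w : List ℕ) (m : ℕ) : ℕ × ℕ × List ℕ :=
  (M.q0, 0, w ++ List.replicate (m - w.length) 0)

/-- `M` has an accepting run on input `w` using at most `m` tape cells. -/
def AcceptsWithin (M : TMach) (w : List ℕ) (m : ℕ) : Prop :=
  ∃ k : ℕ, ((M.stepc)^[k] (M.initConf w m)).1 = M.qf ∧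
    ∀ j, j ≤ k → ((M.stepc)^[j] (M.initConf w m)).2.1 < m

end TMach

/-- `tower k n`: a tower of exponentials of height `k`;
`tower 1 n = 2 ^ n` and `tower (k+1) n = 2 ^ tower k n`. -/
def tower : ℕ → ℕ → ℕ
  | 0, n => n
  | k + 1, n => 2 ^ tower k n

/-- A decision problem over words on the (infinite, ℕ-coded) alphabet. -/
abbrev Lang := Set (List ℕ)

/-- `L` is accepted in space `f`. -/
def AcceptedInSpace (f : ℕ → ℕ) (L : Lang) : Prop :=
  ∃ M : TMach, ∀ w, w ∈ L ↔ M.AcceptsWithin w (f w.length)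

/-- `k`-EXPSPACE: decidable in space `tower k (p(n))` for some polynomial `p`. -/
def InKExpSpace (k : ℕ) (L : Lang) : Prop :=
  ∃ P : Polynomial ℕ, AcceptedInSpace (fun n => tower k (P.eval n)) L

def InExpSpace (L : Lang) : Prop := InKExpSpace 1 L

def InPSpace (L : Lang) : Prop :=
  ∃ P : Polynomial ℕ, AcceptedInSpace (fun n => P.eval n) L

/-! ## Polynomial-time reductions (via Mathlib's TM2 model) -/

/-- A finite-alphabet encoding of `List ℕ`. -/
def listNatFinEncoding : Computability.Encoding (List ℕ) Bool where
  encode w := Computability.finEncodingNatBool.encode (Encodable.encode w)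
  decode l := (Computability.finEncodingNatBool.decode l).bind Encodable.decode
  decode_encode w := by
    simp

/-- `f` is computable in polynomial time. -/
def PolyTimeFun (f : List ℕ → List ℕ) : Prop :=
  Nonempty (Turing.TM2ComputableInPolyTime listNatFinEncoding.encode listNatFinEncoding.encode f)

/-- Polynomial-time many-one reducibility. -/
def ReducesTo (L₁ L₂ : Lang) : Prop :=
  ∃ f : List ℕ → List ℕ, PolyTimeFun f ∧ ∀ w, w ∈ L₁ ↔ f w ∈ L₂

/-! ## Helpers for encodings -/

def encBlock (l : List ℕ) : List ℕ := l.length :: l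

def encListL {α : Type} (enc : α → List ℕ) (l : List α) : List ℕ :=
  l.length :: ((l.map fun x => encBlock (enc x)).foldr (· ++ ·) [])

def encPath (ρ : RawPath) : List ℕ :=
  ρ.start :: ρ.steps.length :: ((ρ.steps.map fun s => [s.1, s.2]).foldr (· ++ ·) [])
/-! ## Walk logic (WL) -/

/-- WL formulas over an ℕ-coded alphabet.  Path variables are naturals; a position
variable is a pair `(p, t)` where `p` is its sort (a path variable) and `t` an index. -/
inductive WL where
  | edge (a : ℕ) (p : ℕ) (t₁ t₂ : ℕ)        -- `E_a(t₁^p, t₂^p)`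
  | lt (p : ℕ) (t₁ t₂ : ℕ)                  -- `t₁^p < t₂^p`
  | sim (p₁ t₁ p₂ t₂ : ℕ)                   -- `t₁^{p₁} ∼ t₂^{p₂}`
  | not (φ : WL)
  | or (φ ψ : WL)
  | exPos (p t : ℕ) (φ : WL)                -- `∃ t^p`
  | exPath (p : ℕ) (φ : WL)                 -- `∃ p`

namespace WL

/-- Satisfaction of WL formulas in a data graph, under an assignment of paths to
path variables and of positions to position variables. -/
def Sat (G : DataGraph) : WL → (ℕ → RawPath) → (ℕ × ℕ → ℕ) → Prop
  | .edge a p t₁ t₂, αp, αt =>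
      αt (p, t₂) = αt (p, t₁) + 1 ∧ αt (p, t₁) < (αp p).len ∧
        (αp p).labelAt (αt (p, t₁)) = a
  | .lt p t₁ t₂, _, αt => αt (p, t₁) < αt (p, t₂)
  | .sim p₁ t₁ p₂ t₂, αp, αt =>
      G.val ((αp p₁).nodeAt (αt (p₁, t₁))) = G.val ((αp p₂).nodeAt (αt (p₂, t₂)))
  | .not φ, αp, αt => ¬ Sat G φ αp αt
  | .or φ ψ, αp, αt => Sat G φ αp αt ∨ Sat G ψ αp αt
  | .exPos p t φ, αp, αt =>
      ∃ i, i ≤ (αp p).len ∧ Sat G φ αp (Function.update αt (p, t) i)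
  | .exPath p φ, αp, αt => ∃ ρ, G.IsPath ρ ∧ Sat G φ (Function.update αp p ρ) αt

/-- Truth of a Boolean (closed) WL formula in `G`. -/
def holds (G : DataGraph) (φ : WL) : Prop :=
  Sat G φ (fun _ => ⟨0, []⟩) (fun _ => 0)

/-- Free position variables. -/
def freePos : WL → Finset (ℕ × ℕ)
  | .edge _ p t₁ t₂ => {(p, t₁), (p, t₂)}
  | .lt p t₁ t₂ => {(p, t₁), (p, t₂)}
  | .sim p₁ t₁ p₂ t₂ => {(p₁, t₁), (p₂, t₂)}
  | .not φ => freePos φ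
  | .or φ ψ => freePos φ ∪ freePos ψ
  | .exPos p t φ => (freePos φ).erase (p, t)
  | .exPath p φ => (freePos φ).filter (fun v => v.1 ≠ p)

/-- Free path variables. -/
def freePath : WL → Finset ℕ
  | .edge _ p _ _ => {p}
  | .lt p _ _ => {p}
  | .sim p₁ _ p₂ _ => {p₁, p₂}
  | .not φ => freePath φ
  | .or φ ψ => freePath φ ∪ freePath ψ
  | .exPos p _ φ => insert p (freePath φ)
  | .exPath p φ => (freePath φ).erase p

/-- A Boolean WL formula: no free variables. -/
def Closed (φ : WL) : Prop := freePos φ = ∅ ∧ freePath φ = ∅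

/-- Labels appearing in a WL formula (its alphabet). -/
def labels : WL → Finset ℕ
  | .edge a _ _ _ => {a}
  | .lt _ _ _ => ∅
  | .sim _ _ _ _ => ∅
  | .not φ => labels φ
  | .or φ ψ => labels φ ∪ labels ψ
  | .exPos _ _ φ => labels φ
  | .exPath _ φ => labels φ

/-- The formula contains no path quantification. -/
def NoPathQuant : WL → Prop
  | .not φ => NoPathQuant φ
  | .or φ ψ => NoPathQuant φ ∧ NoPathQuant ψ
  | .exPos _ _ φ => NoPathQuant φ
  | .exPath _ _ => False
  | _ => True

/-- All position variables of the formula are of sort `p`. -/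
def OnlySort (p : ℕ) : WL → Prop
  | .edge _ q _ _ => q = p
  | .lt q _ _ => q = p
  | .sim q₁ _ q₂ _ => q₁ = p ∧ q₂ = p
  | .not φ => OnlySort p φ
  | .or φ ψ => OnlySort p φ ∧ OnlySort p ψ
  | .exPos q _ φ => q = p ∧ OnlySort p φ
  | .exPath _ φ => OnlySort p φ

end WL

/-- The evaluation problem `Eval(WL, φ)` for a fixed Boolean WL formula `φ` over the
alphabet `{0, …, s-1}`, as a language of encodings of data graphs. -/
def evalWL (s : ℕ) (φ : WL) : Lang :=
  {w | ∃ G : DataGraph, w = encodeGraph G ∧ G.WF s ∧ WL.holds G φ}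
/-! ## Regular expressions with memory (REM) and register logic (RL) -/

/-- Conditions over registers (registers are ℕ-indexed). -/
inductive RCond where
  | eq (i : ℕ)                       -- `r_i^=`
  | and (c₁ c₂ : RCond)
  | not (c : RCond)

/-- A register assignment: `none` is `⊥`. -/
abbrev RAsg := ℕ → Option ℕ

def botAsg : RAsg := fun _ => none

/-- Satisfaction of a condition by the current data value `d` and registers `lam`. -/
def RCond.CSat (d : ℕ) (lam : RAsg) : RCond → Prop
  | .eq i => lam i = some d
  | .and c₁ c₂ => RCond.CSat d lam c₁ ∧ RCond.CSat d lam c₂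
  | .not c => ¬ RCond.CSat d lam c

/-- Registers mentioned in a condition. -/
def RCond.regs : RCond → Finset ℕ
  | .eq i => {i}
  | .and c₁ c₂ => c₁.regs ∪ c₂.regs
  | .not c => c.regs

/-- Regular expressions with memory over an ℕ-coded alphabet and ℕ-indexed registers. -/
inductive REM where
  | eps
  | lab (a : ℕ)
  | union (e₁ e₂ : REM)
  | concat (e₁ e₂ : REM)
  | plus (e : REM)
  | test (e : REM) (c : RCond)       -- `e[c]`
  | store (rs : List ℕ) (e : REM)    -- `↓r̄. e`

/-- `e* := ε ∪ e⁺`. -/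
def REM.star (e : REM) : REM := .union .eps (.plus e)

def setRegs (lam : RAsg) (rs : List ℕ) (d : ℕ) : RAsg :=
  fun i => if i ∈ rs then some d else lam i

/-- Semantics of REMs: `REMSem G e ρ lam lam'` holds iff the path `ρ` (from `ρ.start` to
`ρ.last`) can be parsed according to `e`, transforming register assignment `lam`
into `lam'`. -/
inductive REMSem (G : DataGraph) : REM → RawPath → RAsg → RAsg → Prop
  | eps (u : ℕ) (hu : u < G.n) (lam : RAsg) : REMSem G .eps ⟨u, []⟩ lam lam
  | lab (u a v : ℕ) (h : (u, a, v) ∈ G.edges) (lam : RAsg) :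
      REMSem G (.lab a) ⟨u, [(a, v)]⟩ lam lam
  | unionL {e₁ e₂ ρ lam lam'} : REMSem G e₁ ρ lam lam' → REMSem G (.union e₁ e₂) ρ lam lam'
  | unionR {e₁ e₂ ρ lam lam'} : REMSem G e₂ ρ lam lam' → REMSem G (.union e₁ e₂) ρ lam lam'
  | concat {e₁ e₂ ρ₁ ρ₂ lam lam₁ lam'} :
      REMSem G e₁ ρ₁ lam lam₁ → REMSem G e₂ ρ₂ lam₁ lam' → ρ₁.last = ρ₂.start →
      REMSem G (.concat e₁ e₂) (ρ₁.append ρ₂) lam lam'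
  | plusOne {e ρ lam lam'} : REMSem G e ρ lam lam' → REMSem G (.plus e) ρ lam lam'
  | plusStep {e ρ₁ ρ₂ lam lam₁ lam'} :
      REMSem G e ρ₁ lam lam₁ → REMSem G (.plus e) ρ₂ lam₁ lam' → ρ₁.last = ρ₂.start →
      REMSem G (.plus e) (ρ₁.append ρ₂) lam lam'
  | test {e c ρ lam lam'} :
      REMSem G e ρ lam lam' → RCond.CSat (G.val ρ.last) lam' c →
      REMSem G (.test e c) ρ lam lam'
  | store {rs e ρ lam lam'} :
      REMSem G e ρ (setRegs lam rs (G.val ρ.start)) lam' →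
      REMSem G (.store rs e) ρ lam lam'

def REM.labels : REM → Finset ℕ
  | .eps => ∅
  | .lab a => {a}
  | .union e₁ e₂ => e₁.labels ∪ e₂.labels
  | .concat e₁ e₂ => e₁.labels ∪ e₂.labels
  | .plus e => e.labels
  | .test e _ => e.labels
  | .store _ e => e.labels

def REM.regs : REM → Finset ℕ
  | .eps => ∅
  | .lab _ => ∅
  | .union e₁ e₂ => e₁.regs ∪ e₂.regs
  | .concat e₁ e₂ => e₁.regs ∪ e₂.regs
  | .plus e => e.regs
  | .test e c => e.regs ∪ c.regs
  | .store rs e => rs.toFinset ∪ e.regs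

/-- A term denoting a register assignment: a register-assignment variable or `⊥̄`. -/
inductive RegTerm where
  | var (v : ℕ)
  | bot

def RegTerm.interp (αr : ℕ → RAsg) : RegTerm → RAsg
  | .var v => αr v
  | .bot => botAsg

def RegTerm.fv : RegTerm → Finset ℕ
  | .var v => {v}
  | .bot => ∅

/-- Register logic (RL). -/
inductive RL where
  | nodeEq (x y : ℕ)                            -- `x = y`
  | pathEq (p q : ℕ)                            -- `π = π'`
  | regEq (t₁ t₂ : RegTerm)                     -- `ν = ν'`, `ν = ⊥̄`
  | ends (x p y : ℕ)                            -- `(x, π, y)`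
  | rem (e : REM) (p : ℕ) (t₁ t₂ : RegTerm)     -- `e(π, ν₁, ν₂)`
  | not (φ : RL)
  | or (φ ψ : RL)
  | exNode (x : ℕ) (φ : RL)
  | exPath (p : ℕ) (φ : RL)
  | exReg (v : ℕ) (φ : RL)

/-- A valid register value for the logic with `k` registers over `G`: registers
`≥ k` are empty and stored data values occur in `G`. -/
def ValidAsg (G : DataGraph) (k : ℕ) (lam : RAsg) : Prop :=
  (∀ i, k ≤ i → lam i = none) ∧ ∀ i d, lam i = some d → d ∈ G.dataVals

namespace RL

/-- Satisfaction of RL formulas (with `k` registers) under assignments of nodes,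
paths and register values to the three kinds of variables. -/
def Sat (G : DataGraph) (k : ℕ) : RL → (ℕ → ℕ) → (ℕ → RawPath) → (ℕ → RAsg) → Prop
  | .nodeEq x y, αn, _, _ => αn x = αn y
  | .pathEq p q, _, αp, _ => αp p = αp q
  | .regEq t₁ t₂, _, _, αr => t₁.interp αr = t₂.interp αr
  | .ends x p y, αn, αp, _ => (αp p).start = αn x ∧ (αp p).last = αn y
  | .rem e p t₁ t₂, _, αp, αr => REMSem G e (αp p) (t₁.interp αr) (t₂.interp αr)
  | .not φ, αn, αp, αr => ¬ Sat G k φ αn αp αr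
  | .or φ ψ, αn, αp, αr => Sat G k φ αn αp αr ∨ Sat G k ψ αn αp αr
  | .exNode x φ, αn, αp, αr => ∃ u, u < G.n ∧ Sat G k φ (Function.update αn x u) αp αr
  | .exPath p φ, αn, αp, αr => ∃ ρ, G.IsPath ρ ∧ Sat G k φ αn (Function.update αp p ρ) αr
  | .exReg v φ, αn, αp, αr =>
      ∃ lam, ValidAsg G k lam ∧ Sat G k φ αn αp (Function.update αr v lam)

/-- Truth of a closed RL formula in `G`. -/
def holds (G : DataGraph) (k : ℕ) (φ : RL) : Prop :=
  Sat G k φ (fun _ => 0) (fun _ => ⟨0, []⟩) (fun _ => botAsg)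

def freeNode : RL → Finset ℕ
  | .nodeEq x y => {x, y}
  | .pathEq _ _ => ∅
  | .regEq _ _ => ∅
  | .ends x _ y => {x, y}
  | .rem _ _ _ _ => ∅
  | .not φ => freeNode φ
  | .or φ ψ => freeNode φ ∪ freeNode ψ
  | .exNode x φ => (freeNode φ).erase x
  | .exPath _ φ => freeNode φ
  | .exReg _ φ => freeNode φ

def freePath : RL → Finset ℕ
  | .nodeEq _ _ => ∅
  | .pathEq p q => {p, q}
  | .regEq _ _ => ∅
  | .ends _ p _ => {p}
  | .rem _ p _ _ => {p}
  | .not φ => freePath φ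
  | .or φ ψ => freePath φ ∪ freePath ψ
  | .exNode _ φ => freePath φ
  | .exPath p φ => (freePath φ).erase p
  | .exReg _ φ => freePath φ

def freeReg : RL → Finset ℕ
  | .nodeEq _ _ => ∅
  | .pathEq _ _ => ∅
  | .regEq t₁ t₂ => t₁.fv ∪ t₂.fv
  | .ends _ _ _ => ∅
  | .rem _ _ t₁ t₂ => t₁.fv ∪ t₂.fv
  | .not φ => freeReg φ
  | .or φ ψ => freeReg φ ∪ freeReg ψ
  | .exNode _ φ => freeReg φ
  | .exPath _ φ => freeReg φ
  | .exReg v φ => (freeReg φ).erase v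

/-- A closed RL formula (sentence). -/
def ClosedF (φ : RL) : Prop := freeNode φ = ∅ ∧ freePath φ = ∅ ∧ freeReg φ = ∅

def labels : RL → Finset ℕ
  | .rem e _ _ _ => e.labels
  | .not φ => labels φ
  | .or φ ψ => labels φ ∪ labels ψ
  | .exNode _ φ => labels φ
  | .exPath _ φ => labels φ
  | .exReg _ φ => labels φ
  | _ => ∅

def regs : RL → Finset ℕ
  | .rem e _ _ _ => e.regs
  | .not φ => regs φ
  | .or φ ψ => regs φ ∪ regs ψ
  | .exNode _ φ => regs φ
  | .exPath _ φ => regs φ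
  | .exReg _ φ => regs φ
  | _ => ∅

/-- The formula contains no path quantification. -/
def NoPathQuant : RL → Prop
  | .not φ => NoPathQuant φ
  | .or φ ψ => NoPathQuant φ ∧ NoPathQuant ψ
  | .exNode _ φ => NoPathQuant φ
  | .exReg _ φ => NoPathQuant φ
  | .exPath _ _ => False
  | _ => True

/-- Derived conjunction. -/
def and (φ ψ : RL) : RL := .not (.or (.not φ) (.not ψ))

/-- Derived implication. -/
def imp (φ ψ : RL) : RL := .or (.not φ) ψ

/-- Derived universal quantification over register assignments. -/
def allReg (v : ℕ) (φ : RL) : RL := .not (.exReg v (.not φ))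

end RL
/-! ## Positive fragment RL⁺, nested REMs, and NRL⁺ -/

/-- The positive fragment RL⁺ of register logic. -/
inductive RLPos where
  | nodeEq (x y : ℕ)
  | pathEq (p q : ℕ)
  | regEq (t₁ t₂ : RegTerm)
  | ends (x p y : ℕ)
  | rem (e : REM) (p : ℕ) (t₁ t₂ : RegTerm)
  | or (φ ψ : RLPos)
  | and (φ ψ : RLPos)
  | exNode (x : ℕ) (φ : RLPos)
  | exPath (p : ℕ) (φ : RLPos)
  | exReg (v : ℕ) (φ : RLPos)

namespace RLPos

def Sat (G : DataGraph) (k : ℕ) : RLPos → (ℕ → ℕ) → (ℕ → RawPath) → (ℕ → RAsg) → Prop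
  | .nodeEq x y, αn, _, _ => αn x = αn y
  | .pathEq p q, _, αp, _ => αp p = αp q
  | .regEq t₁ t₂, _, _, αr => t₁.interp αr = t₂.interp αr
  | .ends x p y, αn, αp, _ => (αp p).start = αn x ∧ (αp p).last = αn y
  | .rem e p t₁ t₂, _, αp, αr => REMSem G e (αp p) (t₁.interp αr) (t₂.interp αr)
  | .or φ ψ, αn, αp, αr => Sat G k φ αn αp αr ∨ Sat G k ψ αn αp αr
  | .and φ ψ, αn, αp, αr => Sat G k φ αn αp αr ∧ Sat G k ψ αn αp αr
  | .exNode x φ, αn, αp, αr => ∃ u, u < G.n ∧ Sat G k φ (Function.update αn x u) αp αr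
  | .exPath p φ, αn, αp, αr => ∃ ρ, G.IsPath ρ ∧ Sat G k φ αn (Function.update αp p ρ) αr
  | .exReg v φ, αn, αp, αr =>
      ∃ lam, ValidAsg G k lam ∧ Sat G k φ αn αp (Function.update αr v lam)

def freeNode : RLPos → Finset ℕ
  | .nodeEq x y => {x, y}
  | .pathEq _ _ => ∅
  | .regEq _ _ => ∅
  | .ends x _ y => {x, y}
  | .rem _ _ _ _ => ∅
  | .or φ ψ => freeNode φ ∪ freeNode ψ
  | .and φ ψ => freeNode φ ∪ freeNode ψ
  | .exNode x φ => (freeNode φ).erase x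
  | .exPath _ φ => freeNode φ
  | .exReg _ φ => freeNode φ

def freePath : RLPos → Finset ℕ
  | .nodeEq _ _ => ∅
  | .pathEq p q => {p, q}
  | .regEq _ _ => ∅
  | .ends _ p _ => {p}
  | .rem _ p _ _ => {p}
  | .or φ ψ => freePath φ ∪ freePath ψ
  | .and φ ψ => freePath φ ∪ freePath ψ
  | .exNode _ φ => freePath φ
  | .exPath p φ => (freePath φ).erase p
  | .exReg _ φ => freePath φ

def freeReg : RLPos → Finset ℕ
  | .regEq t₁ t₂ => t₁.fv ∪ t₂.fv
  | .rem _ _ t₁ t₂ => t₁.fv ∪ t₂.fv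
  | .or φ ψ => freeReg φ ∪ freeReg ψ
  | .and φ ψ => freeReg φ ∪ freeReg ψ
  | .exNode _ φ => freeReg φ
  | .exPath _ φ => freeReg φ
  | .exReg v φ => (freeReg φ).erase v
  | _ => ∅

def labels : RLPos → Finset ℕ
  | .rem e _ _ _ => e.labels
  | .or φ ψ => labels φ ∪ labels ψ
  | .and φ ψ => labels φ ∪ labels ψ
  | .exNode _ φ => labels φ
  | .exPath _ φ => labels φ
  | .exReg _ φ => labels φ
  | _ => ∅

end RLPos

/-- Nested regular expressions with memory (NREM): REMs plus the nesting operator `⟨e⟩`. -/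
inductive NREM where
  | eps
  | lab (a : ℕ)
  | union (e₁ e₂ : NREM)
  | concat (e₁ e₂ : NREM)
  | plus (e : NREM)
  | test (e : NREM) (c : RCond)
  | store (rs : List ℕ) (e : NREM)
  | nest (e : NREM)                  -- `⟨e⟩`

def NREM.star (e : NREM) : NREM := .union .eps (.plus e)

/-- Semantics of NREMs. -/
inductive NREMSem (G : DataGraph) : NREM → RawPath → RAsg → RAsg → Prop
  | eps (u : ℕ) (hu : u < G.n) (lam : RAsg) : NREMSem G .eps ⟨u, []⟩ lam lam
  | lab (u a v : ℕ) (h : (u, a, v) ∈ G.edges) (lam : RAsg) :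
      NREMSem G (.lab a) ⟨u, [(a, v)]⟩ lam lam
  | unionL {e₁ e₂ ρ lam lam'} : NREMSem G e₁ ρ lam lam' → NREMSem G (.union e₁ e₂) ρ lam lam'
  | unionR {e₁ e₂ ρ lam lam'} : NREMSem G e₂ ρ lam lam' → NREMSem G (.union e₁ e₂) ρ lam lam'
  | concat {e₁ e₂ ρ₁ ρ₂ lam lam₁ lam'} :
      NREMSem G e₁ ρ₁ lam lam₁ → NREMSem G e₂ ρ₂ lam₁ lam' → ρ₁.last = ρ₂.start →
      NREMSem G (.concat e₁ e₂) (ρ₁.append ρ₂) lam lam'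
  | plusOne {e ρ lam lam'} : NREMSem G e ρ lam lam' → NREMSem G (.plus e) ρ lam lam'
  | plusStep {e ρ₁ ρ₂ lam lam₁ lam'} :
      NREMSem G e ρ₁ lam lam₁ → NREMSem G (.plus e) ρ₂ lam₁ lam' → ρ₁.last = ρ₂.start →
      NREMSem G (.plus e) (ρ₁.append ρ₂) lam lam'
  | test {e c ρ lam lam'} :
      NREMSem G e ρ lam lam' → RCond.CSat (G.val ρ.last) lam' c →
      NREMSem G (.test e c) ρ lam lam'
  | store {rs e ρ lam lam'} :
      NREMSem G e ρ (setRegs lam rs (G.val ρ.start)) lam' →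
      NREMSem G (.store rs e) ρ lam lam'
  | nest {e ρ' lam lam'} :
      NREMSem G e ρ' lam lam' → NREMSem G (.nest e) ⟨ρ'.start, []⟩ lam lam

/-- NRL⁺: the positive fragment of register logic with nested REMs in its atoms. -/
inductive NRLPos where
  | nodeEq (x y : ℕ)
  | pathEq (p q : ℕ)
  | regEq (t₁ t₂ : RegTerm)
  | ends (x p y : ℕ)
  | rem (e : NREM) (p : ℕ) (t₁ t₂ : RegTerm)
  | or (φ ψ : NRLPos)
  | and (φ ψ : NRLPos)
  | exNode (x : ℕ) (φ : NRLPos)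
  | exPath (p : ℕ) (φ : NRLPos)
  | exReg (v : ℕ) (φ : NRLPos)

namespace NRLPos

def Sat (G : DataGraph) (k : ℕ) : NRLPos → (ℕ → ℕ) → (ℕ → RawPath) → (ℕ → RAsg) → Prop
  | .nodeEq x y, αn, _, _ => αn x = αn y
  | .pathEq p q, _, αp, _ => αp p = αp q
  | .regEq t₁ t₂, _, _, αr => t₁.interp αr = t₂.interp αr
  | .ends x p y, αn, αp, _ => (αp p).start = αn x ∧ (αp p).last = αn y
  | .rem e p t₁ t₂, _, αp, αr => NREMSem G e (αp p) (t₁.interp αr) (t₂.interp αr)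
  | .or φ ψ, αn, αp, αr => Sat G k φ αn αp αr ∨ Sat G k ψ αn αp αr
  | .and φ ψ, αn, αp, αr => Sat G k φ αn αp αr ∧ Sat G k ψ αn αp αr
  | .exNode x φ, αn, αp, αr => ∃ u, u < G.n ∧ Sat G k φ (Function.update αn x u) αp αr
  | .exPath p φ, αn, αp, αr => ∃ ρ, G.IsPath ρ ∧ Sat G k φ αn (Function.update αp p ρ) αr
  | .exReg v φ, αn, αp, αr =>
      ∃ lam, ValidAsg G k lam ∧ Sat G k φ αn αp (Function.update αr v lam)

end NRLPos

/-! ## Nondeterministic log-space machines (read-only input tape, bounded work tape) -/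

/-- A nondeterministic Turing machine with a read-only input tape and a work tape.
`δ q a b` (state, input symbol, work symbol) yields a list of possible moves
(new state, written work symbol, input head direction, work head direction);
`true` = right. -/
structure NTM where
  q0 : ℕ
  qf : ℕ
  δ : ℕ → ℕ → ℕ → List (ℕ × ℕ × Bool × Bool)

structure NConf where
  q : ℕ
  ih : ℕ
  wh : ℕ
  work : List ℕ
deriving DecidableEq

def NTM.nstep (M : NTM) (w : List ℕ) (c c' : NConf) : Prop :=
  ∃ t ∈ M.δ c.q (w.getD c.ih 0) (c.work.getD c.wh 0),
    c'.q = t.1 ∧ c'.work = c.work.set c.wh t.2.1 ∧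
    c'.ih = (if t.2.2.1 then c.ih + 1 else c.ih - 1) ∧
    c'.wh = (if t.2.2.2 then c.wh + 1 else c.wh - 1)

/-- `M` accepts `w` using at most `m` work-tape cells. -/
def NTM.Accepts (M : NTM) (w : List ℕ) (m : ℕ) : Prop :=
  ∃ c : NConf, Relation.ReflTransGen (fun a b => M.nstep w a b ∧ b.wh < m)
      ⟨M.q0, 0, 0, List.replicate m 0⟩ c ∧ c.q = M.qf

/-- Nondeterministic logarithmic space. -/
def InNLogSpace (L : Lang) : Prop :=
  ∃ (cst : ℕ) (M : NTM), ∀ w, w ∈ L ↔ M.Accepts w (cst * (Nat.log 2 w.length + 1) + cst)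
/-! ## Encodings of formulas and inputs -/

def encRegTerm : RegTerm → List ℕ
  | .var v => [0, v]
  | .bot => [1]

def encRCond : RCond → List ℕ
  | .eq i => [0, i]
  | .and c₁ c₂ => 1 :: (encRCond c₁ ++ encRCond c₂)
  | .not c => 2 :: encRCond c

def encREM : REM → List ℕ
  | .eps => [0]
  | .lab a => [1, a]
  | .union e₁ e₂ => 2 :: (encREM e₁ ++ encREM e₂)
  | .concat e₁ e₂ => 3 :: (encREM e₁ ++ encREM e₂)
  | .plus e => 4 :: encREM e
  | .test e c => 5 :: (encREM e ++ encRCond c)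
  | .store rs e => 6 :: rs.length :: (rs ++ encREM e)

def encRL : RL → List ℕ
  | .nodeEq x y => [0, x, y]
  | .pathEq p q => [1, p, q]
  | .regEq t₁ t₂ => 2 :: (encRegTerm t₁ ++ encRegTerm t₂)
  | .ends x p y => [3, x, p, y]
  | .rem e p t₁ t₂ => 4 :: p :: (encREM e ++ encRegTerm t₁ ++ encRegTerm t₂)
  | .not φ => 5 :: encRL φ
  | .or φ ψ => 6 :: (encRL φ ++ encRL ψ)
  | .exNode x φ => 7 :: x :: encRL φ
  | .exPath p φ => 8 :: p :: encRL φ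
  | .exReg v φ => 9 :: v :: encRL φ

def encNREM : NREM → List ℕ
  | .eps => [0]
  | .lab a => [1, a]
  | .union e₁ e₂ => 2 :: (encNREM e₁ ++ encNREM e₂)
  | .concat e₁ e₂ => 3 :: (encNREM e₁ ++ encNREM e₂)
  | .plus e => 4 :: encNREM e
  | .test e c => 5 :: (encNREM e ++ encRCond c)
  | .store rs e => 6 :: rs.length :: (rs ++ encNREM e)
  | .nest e => 7 :: encNREM e

def encNRLPos : NRLPos → List ℕ
  | .nodeEq x y => [0, x, y]
  | .pathEq p q => [1, p, q]
  | .regEq t₁ t₂ => 2 :: (encRegTerm t₁ ++ encRegTerm t₂)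
  | .ends x p y => [3, x, p, y]
  | .rem e p t₁ t₂ => 4 :: p :: (encNREM e ++ encRegTerm t₁ ++ encRegTerm t₂)
  | .or φ ψ => 6 :: (encNRLPos φ ++ encNRLPos ψ)
  | .and φ ψ => 10 :: (encNRLPos φ ++ encNRLPos ψ)
  | .exNode x φ => 7 :: x :: encNRLPos φ
  | .exPath p φ => 8 :: p :: encNRLPos φ
  | .exReg v φ => 9 :: v :: encNRLPos φ

/-- Decoding a list into a register assignment: entry `0` is `⊥`, entry `d+1` is value `d`. -/
def regOfList (l : List ℕ) : RAsg := fun i =>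
  match l.getD i 0 with
  | 0 => none
  | d + 1 => some d

/-- Validity of list-coded assignments (to node, path, and register-assignment
variables) over `G`, for the logic with `k` registers. -/
def AsgListsValid (G : DataGraph) (k : ℕ) (ns : List ℕ) (ps : List RawPath)
    (rs : List (List ℕ)) : Prop :=
  (∀ x ∈ ns, x < G.n) ∧ (∀ ρ ∈ ps, G.IsPath ρ) ∧ (∀ l ∈ rs, ValidAsg G k (regOfList l))

/-- Encoding of an input (data graph plus list-coded assignment). -/
def encInputAsg (G : DataGraph) (ns : List ℕ) (ps : List RawPath)
    (rs : List (List ℕ)) : List ℕ :=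
  encBlock (encodeGraph G) ++ encBlock (encListL (fun x => [x]) ns) ++
    encBlock (encListL encPath ps) ++ encBlock (encListL id rs)

/-- The evaluation problem for a fixed RL formula `φ` with `k` registers
(data complexity): inputs are a data graph together with an assignment
for the (free) variables of `φ`. -/
def evalRLFixed (k : ℕ) (φ : RL) : Lang :=
  {w | ∃ (G : DataGraph) (ns : List ℕ) (ps : List RawPath) (rs : List (List ℕ)),
      w = encInputAsg G ns ps rs ∧ G.WFAny ∧ AsgListsValid G k ns ps rs ∧
      RL.Sat G k φ (fun x => ns.getD x 0) (fun p => ps.getD p ⟨0, []⟩)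
        (fun v => regOfList (rs.getD v []))}

/-- The evaluation problem for a fixed closed RL formula (data complexity). -/
def evalRLSentence (k : ℕ) (φ : RL) : Lang :=
  {w | ∃ G : DataGraph, w = encodeGraph G ∧ G.WFAny ∧ RL.holds G k φ}

/-- Encoding of an input for the combined evaluation problem for RL. -/
def encInputRL (k : ℕ) (G : DataGraph) (φ : RL) (ns : List ℕ) (ps : List RawPath)
    (rs : List (List ℕ)) : List ℕ :=
  k :: encBlock (encRL φ) ++ encInputAsg G ns ps rs

/-- The (combined) evaluation problem for register logic, `Eval(RL)`. -/
def evalRLComb : Lang :=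
  {w | ∃ (k : ℕ) (G : DataGraph) (φ : RL) (ns : List ℕ) (ps : List RawPath)
      (rs : List (List ℕ)),
      w = encInputRL k G φ ns ps rs ∧ G.WFAny ∧ AsgListsValid G k ns ps rs ∧
      RL.Sat G k φ (fun x => ns.getD x 0) (fun p => ps.getD p ⟨0, []⟩)
        (fun v => regOfList (rs.getD v []))}

/-- The evaluation problem for a fixed RL⁺ formula (data complexity). -/
def evalRLPosFixed (k : ℕ) (φ : RLPos) : Lang :=
  {w | ∃ (G : DataGraph) (ns : List ℕ) (ps : List RawPath) (rs : List (List ℕ)),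
      w = encInputAsg G ns ps rs ∧ G.WFAny ∧ AsgListsValid G k ns ps rs ∧
      RLPos.Sat G k φ (fun x => ns.getD x 0) (fun p => ps.getD p ⟨0, []⟩)
        (fun v => regOfList (rs.getD v []))}

/-- The evaluation problem for a fixed NRL⁺ formula (data complexity). -/
def evalNRLPosFixed (k : ℕ) (φ : NRLPos) : Lang :=
  {w | ∃ (G : DataGraph) (ns : List ℕ) (ps : List RawPath) (rs : List (List ℕ)),
      w = encInputAsg G ns ps rs ∧ G.WFAny ∧ AsgListsValid G k ns ps rs ∧
      NRLPos.Sat G k φ (fun x => ns.getD x 0) (fun p => ps.getD p ⟨0, []⟩)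
        (fun v => regOfList (rs.getD v []))}

/-- Encoding of an input for the combined evaluation problem for NRL⁺. -/
def encInputNRLPos (k : ℕ) (G : DataGraph) (φ : NRLPos) (ns : List ℕ)
    (ps : List RawPath) (rs : List (List ℕ)) : List ℕ :=
  k :: encBlock (encNRLPos φ) ++ encInputAsg G ns ps rs

/-- The combined evaluation problem for NRL⁺. -/
def evalNRLPosComb : Lang :=
  {w | ∃ (k : ℕ) (G : DataGraph) (φ : NRLPos) (ns : List ℕ) (ps : List RawPath)
      (rs : List (List ℕ)),
      w = encInputNRLPos k G φ ns ps rs ∧ G.WFAny ∧ AsgListsValid G k ns ps rs ∧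
      NRLPos.Sat G k φ (fun x => ns.getD x 0) (fun p => ps.getD p ⟨0, []⟩)
        (fun v => regOfList (rs.getD v []))}

/-! ## Some graph-theoretic queries -/

/-- The query (Q): there are a node `z` and a path from `u` to `v` in which
every node is connected to `z` (by some path). -/
def QueryQ (G : DataGraph) (u v : ℕ) : Prop :=
  ∃ z, z < G.n ∧ ∃ ρ : RawPath, G.IsPath ρ ∧ ρ.start = u ∧ ρ.last = v ∧
    ∀ x ∈ ρ.nodes, ∃ ρ' : RawPath, G.IsPath ρ' ∧ ρ'.start = x ∧ ρ'.last = z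

/-- `G` has a Hamiltonian path: a path visiting every node exactly once. -/
def HamPath (G : DataGraph) : Prop :=
  ∃ ρ : RawPath, G.IsPath ρ ∧ ρ.nodes.Nodup ∧ ∀ v, v < G.n → v ∈ ρ.nodes

/-- `G` (as a representation of an undirected graph) is bipartite. -/
def Bipartite (G : DataGraph) : Prop :=
  ∃ S₁ S₂ : Set ℕ, (∀ v, v < G.n → ((v ∈ S₁ ∨ v ∈ S₂) ∧ ¬(v ∈ S₁ ∧ v ∈ S₂))) ∧
    ∀ e ∈ G.edges, (e.1 ∈ S₁ ∧ e.2.2 ∈ S₂) ∨ (e.1 ∈ S₂ ∧ e.2.2 ∈ S₁)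

/-- `G` contains a cycle of odd length. -/
def HasOddCycle (G : DataGraph) : Prop :=
  ∃ ρ : RawPath, G.IsPath ρ ∧ Odd ρ.steps.length ∧ ρ.last = ρ.start

/-- Isomorphism of data graphs (preserving edges and equalities of data values). -/
def GraphIso (G G' : DataGraph) : Prop :=
  G.n = G'.n ∧ ∃ f : ℕ → ℕ, Set.BijOn f (Set.Iio G.n) (Set.Iio G'.n) ∧
    (∀ u a v, u < G.n → v < G.n → ((u, a, v) ∈ G.edges ↔ (f u, a, f v) ∈ G'.edges)) ∧
    (∀ u v, u < G.n → v < G.n → (G.val u = G.val v ↔ G'.val (f u) = G'.val (f v)))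

/-- A Boolean query: an isomorphism-closed class of graph databases. -/
def IsoClosed (Q : Set DataGraph) : Prop :=
  ∀ G G', GraphIso G G' → (G ∈ Q ↔ G' ∈ Q)
/-! ## Counters and descriptions -/

/-- `Σ_k = {a_k, b_k}`, coded as `a_k = 2k` (representing 0) and `b_k = 2k+1`
(representing 1). -/
def sigmaAlph (k : ℕ) : Finset ℕ := {2 * k, 2 * k + 1}

/-- `Γ_k = Σ_1 ∪ ⋯ ∪ Σ_k`. -/
def gammaAlph (k : ℕ) : Finset ℕ := (Finset.range k).biUnion (fun i => sigmaAlph (i + 1))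

/-- The number represented by a word over some `Σ_k` (`a_k ↦ 0`, `b_k ↦ 1`),
least significant bit first. -/
def bitsVal (w : List ℕ) : ℕ := (w.zipIdx.map (fun x => (x.1 % 2) * 2 ^ x.2)).sum

/-- `SeqDesc Cnt Letter p j w ds`: `w` is a sequence `σ_p d_p ⋯ σ_j d_j` where
`Cnt i σ_i` holds for each `i`, each `d_i` satisfies `Letter`, and `ds = [d_p, …, d_j]`. -/
def SeqDesc (Cnt : ℕ → List ℕ → Prop) (Letter : ℕ → Prop) (p j : ℕ)
    (w : List ℕ) (ds : List ℕ) : Prop :=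
  ∃ σs : List (List ℕ),
    σs.length = j + 1 - p ∧ ds.length = j + 1 - p ∧
    (∀ i, i < σs.length → Cnt (p + i) (σs.getD i [])) ∧
    (∀ d ∈ ds, Letter d) ∧
    w = (List.zipWith (fun σ d => σ ++ [d]) σs ds).foldr (· ++ ·) []

/-- `IsCounterVal f0 n k w v`: `w` is a `k`-counter of length `n` representing the
number `v`. -/
def IsCounterVal (f0 n : ℕ) : ℕ → List ℕ → ℕ → Prop
  | 0, _, _ => False
  | 1, w, v => w.length = f0 * n ∧ (∀ l ∈ w, l ∈ sigmaAlph 1) ∧ v = bitsVal w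
  | k + 2, w, v =>
      ∃ ds : List ℕ,
        SeqDesc (fun i σ => IsCounterVal f0 n (k + 1) σ i) (· ∈ sigmaAlph (k + 2)) 0
          (tower (k + 1) (f0 * n) - 1) w ds ∧ v = bitsVal ds

/-- `w` is a `(k, f0·n, p)`-description over the alphabet `Δ`. -/
def IsDescription (f0 n k p : ℕ) (Δ : Finset ℕ) (w : List ℕ) : Prop :=
  2 ≤ k ∧ ∃ ds : List ℕ,
    SeqDesc (fun i σ => IsCounterVal f0 n (k - 1) σ i) (· ∈ Δ) p
      (tower k (f0 * (n - 1)) - 1) w ds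

/-- Projection of a word onto a subalphabet. -/
def proj (S : Finset ℕ) (l : List ℕ) : List ℕ := l.filter (fun a => decide (a ∈ S))

/-- The letter `c` occurs exactly once in `l`, namely at the first position. -/
def FirstOnly (c : ℕ) (l : List ℕ) : Prop := ∃ l', l = c :: l' ∧ c ∉ l'

/-- The letter `c` occurs exactly once in `l`, namely at the last position. -/
def LastOnly (c : ℕ) (l : List ℕ) : Prop := ∃ l', l = l' ++ [c] ∧ c ∉ l'

/-! ## First-order logic over the vocabulary τ -/

abbrev GPath (G : DataGraph) := {ρ : RawPath // G.IsPath ρ}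
abbrev RegVal (G : DataGraph) (k : ℕ) := {lam : RAsg // ValidAsg G k lam}

theorem botValid (G : DataGraph) (k : ℕ) : ValidAsg G k botAsg :=
  ⟨fun _ _ => rfl, fun _ d h => by simp [botAsg] at h⟩

/-- The common domain: nodes, paths and `k`-tuples of register values of `G`. -/
def TDom (G : DataGraph) (k : ℕ) : Type := Fin G.n ⊕ (GPath G ⊕ RegVal G k)

/-- Membership in the structure determined by a set `P` of paths. -/
def inTDom {G : DataGraph} {k : ℕ} (P : Set (GPath G)) : TDom G k → Prop
  | Sum.inl _ => True
  | Sum.inr (Sum.inl ρ) => ρ ∈ P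
  | Sum.inr (Sum.inr _) => True

/-- First-order formulas over the vocabulary
`⟨Nodes, Paths, Registers, Endpoints, e_1, …, e_m, ⊥̄⟩`; variables are naturals. -/
inductive FOF (m : ℕ) where
  | eq (x y : ℕ)
  | nodes (x : ℕ)
  | paths (x : ℕ)
  | registers (x : ℕ)
  | endpoints (x y z : ℕ)
  | erel (i : Fin m) (x y z : ℕ)
  | isBot (x : ℕ)
  | not (φ : FOF m)
  | or (φ ψ : FOF m)
  | ex (x : ℕ) (φ : FOF m)

/-- Quantifier rank. -/
def FOF.qrank {m : ℕ} : FOF m → ℕ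
  | .not φ => φ.qrank
  | .or φ ψ => max φ.qrank ψ.qrank
  | .ex _ φ => φ.qrank + 1
  | _ => 0

/-- Satisfaction over the τ-structure whose path elements are those in `P` (the
nodes and register values of `G` are always present). -/
def FOF.FSat {m : ℕ} (G : DataGraph) (k : ℕ) (es : Fin m → REM) (P : Set (GPath G)) :
    FOF m → (ℕ → TDom G k) → Prop
  | .eq x y, α => α x = α y
  | .nodes x, α => ∃ u, α x = Sum.inl u
  | .paths x, α => ∃ ρ, ρ ∈ P ∧ α x = Sum.inr (Sum.inl ρ)
  | .registers x, α => ∃ l, α x = Sum.inr (Sum.inr l)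
  | .endpoints x y z, α => ∃ (u v : Fin G.n) (ρ : GPath G), ρ ∈ P ∧
      α x = Sum.inl u ∧ α y = Sum.inr (Sum.inl ρ) ∧ α z = Sum.inl v ∧
      ρ.1.start = (u : ℕ) ∧ ρ.1.last = (v : ℕ)
  | .erel i x y z, α => ∃ (l₁ l₂ : RegVal G k) (ρ : GPath G), ρ ∈ P ∧
      α x = Sum.inr (Sum.inr l₁) ∧ α y = Sum.inr (Sum.inl ρ) ∧
      α z = Sum.inr (Sum.inr l₂) ∧ REMSem G (es i) ρ.1 l₁.1 l₂.1
  | .isBot x, α => α x = Sum.inr (Sum.inr ⟨botAsg, botValid G k⟩)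
  | .not φ, α => ¬ FOF.FSat G k es P φ α
  | .or φ ψ, α => FOF.FSat G k es P φ α ∨ FOF.FSat G k es P ψ α
  | .ex x φ, α => ∃ d : TDom G k, inTDom P d ∧ FOF.FSat G k es P φ (Function.update α x d)

/-- The path `ρ` satisfies the type `E` (relative to the REMs `es`). -/
def SatType {m : ℕ} (G : DataGraph) (k : ℕ) (es : Fin m → REM) (ρ : RawPath)
    (E : Set (Fin m × RegVal G k × RegVal G k)) : Prop :=
  ∀ (i : Fin m) (l₁ l₂ : RegVal G k), REMSem G (es i) ρ l₁.1 l₂.1 ↔ (i, l₁, l₂) ∈ E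
/-! ## Further auxiliary notions used in the statements -/

/-- PSPACE-hardness (w.r.t. polynomial-time reductions). -/
def PSpaceHard (L : Lang) : Prop := ∀ L' : Lang, InPSpace L' → ReducesTo L' L

/-- A Boolean query on graph databases over `{0, …, s-1}` is definable in WL. -/
def DefinableWL (s : ℕ) (Q : Set DataGraph) : Prop :=
  ∃ φ : WL, WL.Closed φ ∧ (∀ a ∈ WL.labels φ, a < s) ∧
    ∀ G : DataGraph, G.WF s → G.IsDB → (G ∈ Q ↔ WL.holds G φ)

/-- A Boolean query on graph databases over `{0, …, s-1}` is definable in RL. -/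
def DefinableRL (s : ℕ) (Q : Set DataGraph) : Prop :=
  ∃ (k : ℕ) (φ : RL), RL.ClosedF φ ∧ (∀ a ∈ RL.labels φ, a < s) ∧
    ∀ G : DataGraph, G.WF s → G.IsDB → (G ∈ Q ↔ RL.holds G k φ)

/-- Assignment of the path `ρ` to the path variable `0`. -/
def asg1 (ρ : RawPath) : ℕ → RawPath :=
  Function.update (fun _ => (⟨0, []⟩ : RawPath)) 0 ρ

/-- Assignment of `ρ`, `ρ'` to the path variables `0`, `1`. -/
def asg2 (ρ ρ' : RawPath) : ℕ → RawPath := Function.update (asg1 ρ) 1 ρ'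

/-- Default assignment for position variables. -/
def posDefault : ℕ × ℕ → ℕ := fun _ => 0

/-- The `Γ_k`-projection of the label of `ρ` is a `k`-counter encoding the number `v`. -/
def EncodesVal (f0 n k : ℕ) (ρ : RawPath) (v : ℕ) : Prop :=
  IsCounterVal f0 n k (proj (gammaAlph k) ρ.label) v

/-- The assignment sending the first variables to the parameter tuples
`vbar`, `ρbar`, `lbar` (and all remaining variables to `⊥̄`). -/
def paramAsg (G : DataGraph) (k : ℕ) {a b c : ℕ} (vbar : Fin a → Fin G.n)
    (ρbar : Fin b → GPath G) (lbar : Fin c → RegVal G k) : ℕ → TDom G k := fun x =>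
  if h : x < a then Sum.inl (vbar ⟨x, h⟩)
  else if h2 : x < a + b then Sum.inr (Sum.inl (ρbar ⟨x - a, by omega⟩))
  else if h3 : x < a + b + c then Sum.inr (Sum.inr (lbar ⟨x - a - b, by omega⟩))
  else Sum.inr (Sum.inr ⟨botAsg, botValid G k⟩)

/-- Encoding of an instance of the "`i` distinct paths of a given type" problem. -/
def encInst6 (G : DataGraph) (es : List REM) (u v : ℕ)
    (El : List (ℕ × List ℕ × List ℕ)) (i : ℕ) : List ℕ :=
  encBlock (encodeGraph G) ++ encBlock (encListL encREM es) ++ [u, v, i] ++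
    encBlock (encListL (fun t => t.1 :: (encBlock t.2.1 ++ encBlock t.2.2)) El)

/-- `ρ` satisfies the (list-coded) type `El` relative to the (list-coded) REMs `es`:
for every `e ∈ es` and all valid register values `lam`, `lam'`,
`(ρ.start, lam, ρ, ρ.last, lam') ∈ ⟦e⟧_G` exactly when the triple is listed in `El`. -/
def SatTypeList (G : DataGraph) (k : ℕ) (es : List REM) (ρ : RawPath)
    (El : List (ℕ × List ℕ × List ℕ)) : Prop :=
  ∀ idx, idx < es.length → ∀ lam lam' : RAsg, ValidAsg G k lam → ValidAsg G k lam' →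
    (REMSem G (es.getD idx .eps) ρ lam lam' ↔
      ∃ t ∈ El, t.1 = idx ∧ regOfList t.2.1 = lam ∧ regOfList t.2.2 = lam')

/-! Over the one-letter alphabet every path parses as `a*`, so `e₁(π, ν, ν)` says that `ν(r)` is
the data value of some node of `π`, and `e₂(π', ν, ν)` that it is the data value of the first node
of `π'`. Taking for `ν` the value of a node `x` of `π`, the formula provides a path `π'` to `z`
whose first node has the same data value as `x`; since data values are injective on the nodes of
a graph database, `π'` starts at `x`. Conversely, a path from `x` to `z` witnesses `π'`. -/

namespace RawPath

@[simp] lemma last_cons (s a v : ℕ) (l : List (ℕ × ℕ)) :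
    last ⟨s, (a, v) :: l⟩ = last ⟨v, l⟩ := by
  simp only [last, List.map_cons, List.getLastD_cons]

lemma last_mem_nodes (ρ : RawPath) : ρ.last ∈ ρ.nodes :=
  List.getLastD_mem_cons

lemma nodes_subset_nodes_append (ρ₁ ρ₂ : RawPath) : ρ₁.nodes ⊆ (ρ₁.append ρ₂).nodes := by
  simp only [nodes, append, List.map_append]
  exact List.cons_subset_cons _ (List.subset_append_left _ _)

end RawPath

namespace DataGraph

variable {G : DataGraph}

lemma isPath_cons (hE : ∀ e ∈ G.edges, e.2.2 < G.n) {s a v : ℕ} {l : List (ℕ × ℕ)} :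
    G.IsPath ⟨s, (a, v) :: l⟩ ↔ s < G.n ∧ (s, a, v) ∈ G.edges ∧ G.IsPath ⟨v, l⟩ := by
  constructor
  · rintro ⟨hs, h⟩
    have h0 := h 0 (by simp)
    refine ⟨hs, h0, hE _ h0, fun i hi => ?_⟩
    simpa [RawPath.nodeAt, RawPath.labelAt, RawPath.nodes] using h (i + 1) (by simpa using hi)
  · rintro ⟨hs, he, -, h⟩
    refine ⟨hs, fun i hi => ?_⟩
    cases i with
    | zero => simpa [RawPath.nodeAt, RawPath.labelAt, RawPath.nodes] using he
    | succ i =>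
      simpa [RawPath.nodeAt, RawPath.labelAt, RawPath.nodes] using h i (by simpa using hi)

lemma IsPath.lt_of_mem_nodes (hE : ∀ e ∈ G.edges, e.2.2 < G.n) {ρ : RawPath}
    (hρ : G.IsPath ρ) {x : ℕ} (hx : x ∈ ρ.nodes) : x < G.n := by
  obtain ⟨s, l⟩ := ρ
  induction l generalizing s with
  | nil => simp_all [RawPath.nodes, IsPath]
  | cons p l ih =>
    obtain ⟨hs, -, hρ'⟩ := (isPath_cons hE).mp hρ
    rcases List.mem_cons.mp hx with rfl | hx
    · exact hs
    · exact ih _ hρ' hx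

lemma IsPath.exists_append_eq (hE : ∀ e ∈ G.edges, e.2.2 < G.n) {ρ : RawPath}
    (hρ : G.IsPath ρ) {x : ℕ} (hx : x ∈ ρ.nodes) :
    ∃ ρ₁ ρ₂ : RawPath, ρ = ρ₁.append ρ₂ ∧ ρ₁.last = x ∧ ρ₂.start = x ∧
      G.IsPath ρ₁ ∧ G.IsPath ρ₂ := by
  obtain ⟨s, l⟩ := ρ
  induction l generalizing s with
  | nil =>
    obtain rfl : x = s := by simpa [RawPath.nodes] using hx
    exact ⟨⟨x, []⟩, ⟨x, []⟩, rfl, rfl, rfl, hρ, hρ⟩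
  | cons p l ih =>
    obtain ⟨a, v⟩ := p
    have hρ' := (isPath_cons hE).mp hρ
    rcases List.mem_cons.mp hx with rfl | hx
    · exact ⟨⟨x, []⟩, _, rfl, rfl, rfl, ⟨hρ'.1, by simp⟩, hρ⟩
    · obtain ⟨⟨s₁, l₁⟩, ρ₂, heq, hlast, hstart, h₁, h₂⟩ := ih v hρ'.2.2 hx
      simp only [RawPath.append, RawPath.mk.injEq] at heq
      obtain ⟨rfl, rfl⟩ := heq
      exact ⟨⟨s, (a, v) :: l₁⟩, ρ₂, rfl, by rwa [RawPath.last_cons], hstart,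
        (isPath_cons hE).mpr ⟨hρ'.1, hρ'.2.1, h₁⟩, h₂⟩

end DataGraph

lemma DataGraph.WF.target_lt {G : DataGraph} {s : ℕ} (hG : G.WF s) :
    ∀ e ∈ G.edges, e.2.2 < G.n :=
  fun e he => (hG.1 e he).2.2

def DataGraph.Reaches (G : DataGraph) (x z : ℕ) : Prop :=
  ∃ ρ : RawPath, G.IsPath ρ ∧ ρ.start = x ∧ ρ.last = z

def REM.StoreFree : REM → Prop
  | .eps | .lab _ => True
  | .union e₁ e₂ | .concat e₁ e₂ => e₁.StoreFree ∧ e₂.StoreFree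
  | .plus e | .test e _ => e.StoreFree
  | .store _ _ => False

namespace REMSem

variable {G : DataGraph}

lemma eq_of_storeFree {e : REM} {ρ : RawPath} {lam lam' : RAsg} (h : REMSem G e ρ lam lam')
    (he : e.StoreFree) : lam' = lam := by
  induction h with
  | eps | lab => rfl
  | unionL _ ih => exact ih he.1
  | unionR _ ih => exact ih he.2
  | concat _ _ _ ih₁ ih₂ => rw [ih₂ he.2, ih₁ he.1]
  | plusOne _ ih => exact ih he
  | plusStep _ _ _ ih₁ ih₂ => rw [ih₂ he, ih₁ he]
  | test _ _ ih => exact ih he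
  | store => exact he.elim

lemma star_lab_zero (hG : G.WF 1) {ρ : RawPath} (hρ : G.IsPath ρ) (lam : RAsg) :
    REMSem G (REM.lab 0).star ρ lam lam := by
  obtain ⟨s, l⟩ := ρ
  induction l generalizing s with
  | nil => exact unionL (eps s hρ.1 lam)
  | cons p l ih =>
    obtain ⟨a, v⟩ := p
    obtain ⟨-, hedge, hρ'⟩ := (DataGraph.isPath_cons hG.target_lt).mp hρ
    obtain rfl : a = 0 := Nat.lt_one_iff.mp (hG.1 _ hedge).2.1
    have hlab := lab s 0 v hedge lam
    cases ih v hρ' with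
    | unionL h => cases h; exact unionR (plusOne hlab)
    | unionR h => exact unionR (plusStep hlab h rfl)

lemma star_lab_zero_test_concat_iff (hG : G.WF 1) {ρ : RawPath} (hρ : G.IsPath ρ)
    {c : RCond} {lam : RAsg} :
    REMSem G (((REM.lab 0).star.test c).concat (REM.lab 0).star) ρ lam lam ↔
      ∃ x ∈ ρ.nodes, c.CSat (G.val x) lam := by
  constructor
  · intro h
    cases h with | concat h₁ _ _ => ?_
    cases h₁ with | test h₁ hc => ?_
    rw [h₁.eq_of_storeFree ⟨trivial, trivial⟩] at hc
    exact ⟨_, RawPath.nodes_subset_nodes_append _ _ (RawPath.last_mem_nodes _), hc⟩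
  · rintro ⟨x, hx, hc⟩
    obtain ⟨ρ₁, ρ₂, rfl, hlast, hstart, h₁, h₂⟩ := hρ.exists_append_eq hG.target_lt hx
    exact concat (test (star_lab_zero hG h₁ lam) (hlast ▸ hc)) (star_lab_zero hG h₂ lam)
      (hlast.trans hstart.symm)

lemma eps_test_concat_star_lab_zero_iff (hG : G.WF 1) {ρ : RawPath} (hρ : G.IsPath ρ)
    {c : RCond} {lam : RAsg} :
    REMSem G ((REM.eps.test c).concat (REM.lab 0).star) ρ lam lam ↔
      c.CSat (G.val ρ.start) lam := by
  constructor
  · intro h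
    cases h with | concat h₁ _ _ => ?_
    cases h₁ with | test h₁ hc => ?_
    cases h₁
    exact hc
  · intro hc
    simpa [RawPath.append] using concat (test (eps ρ.start hρ.1 lam) hc) (star_lab_zero hG hρ lam) rfl

end REMSem

lemma validAsg_update_botAsg {G : DataGraph} {k i x : ℕ} (hi : i < k) (hx : x < G.n) :
    ValidAsg G k (Function.update botAsg i (some (G.val x))) := by
  refine ⟨fun j hj => ?_, fun j d hd => ?_⟩
  · simp [Function.update_of_ne (show j ≠ i by omega), botAsg]
  · by_cases hj : j = i
    · subst hj
      exact ⟨x, hx, Option.some_injective _ (by simpa using hd)⟩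
    · simp [Function.update_of_ne hj, botAsg] at hd

namespace RL

variable {G : DataGraph} {k : ℕ} {φ ψ : RL} {αn : ℕ → ℕ} {αp : ℕ → RawPath} {αr : ℕ → RAsg}

@[simp] lemma sat_and : (φ.and ψ).Sat G k αn αp αr ↔ φ.Sat G k αn αp αr ∧ ψ.Sat G k αn αp αr := by
  simp only [RL.and, Sat, not_or, not_not]

@[simp] lemma sat_imp :
    (φ.imp ψ).Sat G k αn αp αr ↔ (φ.Sat G k αn αp αr → ψ.Sat G k αn αp αr) := by
  simp only [RL.imp, Sat, imp_iff_not_or]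

@[simp] lemma sat_allReg {v : ℕ} : (allReg v φ).Sat G k αn αp αr ↔
    ∀ lam, ValidAsg G k lam → φ.Sat G k αn αp (Function.update αr v lam) := by
  simp only [allReg, Sat, not_exists, not_and, not_not]

end RL

lemma forall_validAsg_iff_forall_mem_nodes_reaches {G : DataGraph} (hG : G.WF 1)
    (hDB : G.IsDB) {ρ : RawPath} (hρ : G.IsPath ρ) (z : ℕ) :
    (∀ lam, ValidAsg G 1 lam →
      REMSem G (((REM.lab 0).star.test (.eq 0)).concat (REM.lab 0).star) ρ lam lam →
        ∃ z' < G.n, ∃ ρ' : RawPath, G.IsPath ρ' ∧ (ρ'.start = z' ∧ ρ'.last = z) ∧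
          REMSem G ((REM.eps.test (.eq 0)).concat (REM.lab 0).star) ρ' lam lam) ↔
      ∀ x ∈ ρ.nodes, G.Reaches x z := by
  constructor
  · intro h x hx
    have hxn := hρ.lt_of_mem_nodes hG.target_lt hx
    obtain ⟨_, hρ'n, ρ', hρ', ⟨rfl, hlast⟩, hsem⟩ := h _ (validAsg_update_botAsg zero_lt_one hxn)
      ((REMSem.star_lab_zero_test_concat_iff hG hρ).2 ⟨x, hx, by simp [RCond.CSat]⟩)
    have hval : G.val ρ'.start = G.val x := by
      simpa [RCond.CSat] using ((REMSem.eps_test_concat_star_lab_zero_iff hG hρ').1 hsem).symm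
    exact ⟨ρ', hρ', hDB _ _ hρ'n hxn hval, hlast⟩
  · intro h lam _ hsem
    obtain ⟨x, hx, hc⟩ := (REMSem.star_lab_zero_test_concat_iff hG hρ).1 hsem
    obtain ⟨ρ', hρ', rfl, hlast⟩ := h x hx
    exact ⟨_, hρ'.1, ρ', hρ', ⟨rfl, hlast⟩, (REMSem.eps_test_concat_star_lab_zero_iff hG hρ').2 hc⟩

/-- Variables: nodes `x, y, z, z'` are `0, 1, 2, 3`; paths `π, π'` are `0, 1`; the register
assignment `ν` is `0`; the letter `a` is `0`. -/
theorem rl_expresses_queryQ :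
    ∀ G : DataGraph, G.WF 1 → G.IsDB → ∀ u v, u < G.n → v < G.n →
      (RL.Sat G 1
          (RL.exPath 0 (RL.and (RL.ends 0 0 1)
            (RL.exNode 2 (RL.allReg 0 (RL.imp
              (RL.rem (REM.concat (REM.test (REM.star (REM.lab 0)) (RCond.eq 0))
                  (REM.star (REM.lab 0))) 0 (RegTerm.var 0) (RegTerm.var 0))
              (RL.exNode 3 (RL.exPath 1 (RL.and (RL.ends 3 1 2)
                (RL.rem (REM.concat (REM.test REM.eps (RCond.eq 0))
                    (REM.star (REM.lab 0))) 1 (RegTerm.var 0) (RegTerm.var 0))))))))))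
          (fun x => if x = 0 then u else v) (fun _ => ⟨0, []⟩) (fun _ => botAsg) ↔
        QueryQ G u v) := by
  intro G hG hDB u v _ _
  simp only [RL.Sat, RL.sat_and, RL.sat_allReg, RL.sat_imp, RegTerm.interp, Function.update_self,
    Function.update_of_ne, ne_eq, one_ne_zero, not_false_eq_true, Nat.reduceEqDiff, if_true]
  constructor
  · rintro ⟨ρ, hρ, ⟨rfl, rfl⟩, z, hz, h⟩
    exact ⟨z, hz, ρ, hρ, rfl, rfl, (forall_validAsg_iff_forall_mem_nodes_reaches hG hDB hρ z).1 h⟩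
  · rintro ⟨z, hz, ρ, hρ, rfl, rfl, h⟩
    exact ⟨ρ, hρ, ⟨rfl, rfl⟩, z, hz, (forall_validAsg_iff_forall_mem_nodes_reaches hG hDB hρ z).2 h⟩
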